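/- arXiv:2505.21039 — 3 statements merged into one kernel-verified Lean document; each statement's English description precedes it below -/
import Mathlib

section
/- Let Ω(A) = λ₁‖A‖_* + λ₂‖A‖_F² defined on n×n positive semidefinite matrices, with λ₁ ≥ 0 and λ₂ > 0, where ‖A‖_* = trace(A) for A ⪰ 0 and ‖A‖_F is the Frobenius norm. Then for any symmetric matrix B, sup over A ⪰ 0 of ⟨A, B⟩ − λ₁ trace(A) − λ₂‖A‖_F² equals (1/(4λ₂))‖[B − λ₁ I]₊‖_F², i.e. the Fenchel conjugate of Ω over the PSD cone is Ω*(B) = (1/(4λ₂))‖[B − λ₁I]₊‖_F², attained at A* = (1/(2λ₂))[B − λ₁ I]₊. -/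
/-!
With `C = B - λ₁I`, the objective is `⟨A, C⟩ - λ₂‖A‖_F²`. Split `C = C₊ - C₋` with `C₊, C₋ ⪰ 0`
and `C₊C₋ = 0`. For `A ⪰ 0` we have `⟨A, C₋⟩ ≥ 0`, so `⟨A, C⟩ ≤ ⟨A, C₊⟩`, and completing the
square bounds `⟨A, C₊⟩ - λ₂‖A‖_F²` by `‖C₊‖_F² / (4λ₂)`. At `A = C₊ / (2λ₂)` both inequalities
are equalities, the first because `⟨C₊, C⟩ = ‖C₊‖_F²`.
-/

open Matrix

/-- Matrix positive part via eigendecomposition (junk value `0` if not Hermitian). -/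
noncomputable def matPosPart {n : Type*} [Fintype n] [DecidableEq n]
    (M : Matrix n n ℝ) : Matrix n n ℝ :=
  if h : M.IsHermitian then
    (h.eigenvectorUnitary : Matrix n n ℝ) *
      Matrix.diagonal (fun i => max 0 (h.eigenvalues i)) *
      star (h.eigenvectorUnitary : Matrix n n ℝ)
  else 0

/-- Squared Frobenius norm `‖A‖_F² = trace(AᵀA)`. -/
noncomputable def frobSq {n : Type*} [Fintype n] (A : Matrix n n ℝ) : ℝ :=
  Matrix.trace (Aᵀ * A)

open scoped MatrixOrder ComplexOrder

namespace Matrix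

variable {n : Type*} [Fintype n]

lemma PosSemidef.trace_mul_nonneg {𝕜 : Type*} [RCLike 𝕜] {A B : Matrix n n 𝕜}
    (hA : A.PosSemidef) (hB : B.PosSemidef) : 0 ≤ trace (A * B) := by
  classical
  have hsqrt : (CFC.sqrt A)ᴴ = CFC.sqrt A := (CFC.sqrt_nonneg A).posSemidef.isHermitian.eq
  calc 0 ≤ trace (CFC.sqrt A * B * (CFC.sqrt A)ᴴ) :=
        (hB.mul_mul_conjTranspose_same _).trace_nonneg
    _ = trace (A * B) := by
        rw [hsqrt, trace_mul_cycle, CFC.sqrt_mul_sqrt_self A hA.nonneg]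

variable [DecidableEq n]

lemma IsHermitian.matPosPart_eq_posPart {M : Matrix n n ℝ} (hM : M.IsHermitian) :
    matPosPart M = M⁺ := by
  rw [CFC.posPart_def, cfcₙ_eq_cfc, hM.cfc_eq, IsHermitian.cfc, Unitary.conjStarAlgAut_apply,
    matPosPart, dif_pos hM]
  simp [RCLike.ofReal_real_eq_id, Function.comp_def, posPart_def, max_comm]

end Matrix

namespace CFC

variable {A : Type*} [NonUnitalRing A] [Module ℝ A] [SMulCommClass ℝ A A] [IsScalarTower ℝ A A]
  [StarRing A] [TopologicalSpace A] [NonUnitalContinuousFunctionalCalculus ℝ A IsSelfAdjoint]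

lemma posPart_mul_eq_posPart_mul_posPart {a : A} (ha : IsSelfAdjoint a) : a⁺ * a = a⁺ * a⁺ := by
  nth_rw 2 [← posPart_sub_negPart a ha]
  rw [mul_sub, posPart_mul_negPart, sub_zero]

end CFC

section Frobenius

variable {n : Type*} [Fintype n]

lemma frobSq_nonneg (A : Matrix n n ℝ) : 0 ≤ frobSq A :=
  (posSemidef_conjTranspose_mul_self A).trace_nonneg

lemma frobSq_smul (c : ℝ) (A : Matrix n n ℝ) : frobSq (c • A) = c ^ 2 * frobSq A := by
  simp only [frobSq, transpose_smul, Matrix.smul_mul, Matrix.mul_smul, trace_smul, smul_eq_mul]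
  ring

lemma trace_transpose_mul_sub_le_frobSq (A P : Matrix n n ℝ) {l : ℝ} (hl : 0 < l) :
    trace (Aᵀ * P) - l * frobSq A ≤ 1 / (4 * l) * frobSq P := by
  have hexpand : frobSq ((2 * l) • A - P)
      = 4 * l ^ 2 * frobSq A - 4 * l * trace (Aᵀ * P) + frobSq P := by
    have hsymm : trace (Pᵀ * A) = trace (Aᵀ * P) := by
      rw [← trace_transpose (Pᵀ * A), transpose_mul, transpose_transpose]
    simp only [frobSq, transpose_sub, transpose_smul, Matrix.sub_mul, Matrix.mul_sub,
      Matrix.smul_mul, Matrix.mul_smul, trace_sub, trace_smul, smul_eq_mul, hsymm]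
    ring
  rw [one_div, ← div_eq_inv_mul, le_div_iff₀ (by positivity)]
  nlinarith [frobSq_nonneg ((2 * l) • A - P)]

lemma trace_transpose_mul_sub_smul_one [DecidableEq n] (A B : Matrix n n ℝ) (c : ℝ) :
    trace (Aᵀ * (B - c • 1)) = trace (Aᵀ * B) - c * trace A := by
  rw [Matrix.mul_sub, trace_sub, Matrix.mul_smul, Matrix.mul_one, trace_smul, trace_transpose,
    smul_eq_mul]

end Frobenius

section matPosPart

variable {n : Type*} [Fintype n] [DecidableEq n] {C : Matrix n n ℝ}

lemma posSemidef_matPosPart (hC : C.IsHermitian) : (matPosPart C).PosSemidef :=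
  hC.matPosPart_eq_posPart ▸ (CFC.posPart_nonneg C).posSemidef

lemma trace_transpose_mul_le_matPosPart {A : Matrix n n ℝ} (hA : A.PosSemidef)
    (hC : C.IsHermitian) : trace (Aᵀ * C) ≤ trace (Aᵀ * matPosPart C) := by
  have hneg : matPosPart C - C = C⁻ := by
    rw [hC.matPosPart_eq_posPart, sub_eq_iff_eq_add', ← sub_eq_iff_eq_add,
      CFC.posPart_sub_negPart C hC]
  rw [(isHermitian_iff_isSymm.mp hA.isHermitian).eq, ← sub_nonneg, ← trace_sub, ← Matrix.mul_sub,
    hneg]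
  exact hA.trace_mul_nonneg (CFC.negPart_nonneg C).posSemidef

lemma trace_transpose_matPosPart_mul (hC : C.IsHermitian) :
    trace ((matPosPart C)ᵀ * C) = frobSq (matPosPart C) := by
  rw [frobSq, (isHermitian_iff_isSymm.mp (posSemidef_matPosPart hC).isHermitian).eq,
    hC.matPosPart_eq_posPart, CFC.posPart_mul_eq_posPart_mul_posPart hC]

end matPosPart

theorem fenchel_conjugate_psd_cone_general
    {n : Type*} [Fintype n] [DecidableEq n]
    (B : Matrix n n ℝ) (hB : B.IsHermitian)
    (l1 l2 : ℝ) (hl2 : 0 < l2) :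
    (⨆ A : {A : Matrix n n ℝ // A.PosSemidef},
        Matrix.trace ((A : Matrix n n ℝ)ᵀ * B) - l1 * Matrix.trace (A : Matrix n n ℝ)
          - l2 * frobSq (A : Matrix n n ℝ)) =
      (1 / (4 * l2)) * frobSq (matPosPart (B - l1 • (1 : Matrix n n ℝ))) ∧
    (Matrix.trace (((1 / (2 * l2)) • matPosPart (B - l1 • (1 : Matrix n n ℝ)))ᵀ * B)
        - l1 * Matrix.trace ((1 / (2 * l2)) • matPosPart (B - l1 • (1 : Matrix n n ℝ)))
        - l2 * frobSq ((1 / (2 * l2)) • matPosPart (B - l1 • (1 : Matrix n n ℝ)))) =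
      (1 / (4 * l2)) * frobSq (matPosPart (B - l1 • (1 : Matrix n n ℝ))) := by
  set C := B - l1 • (1 : Matrix n n ℝ)
  have hC : C.IsHermitian := hB.sub (isHermitian_one.smul (IsSelfAdjoint.all l1))
  set P := matPosPart C
  set f : Matrix n n ℝ → ℝ := fun A => trace (Aᵀ * B) - l1 * trace A - l2 * frobSq A
  have hf (A : Matrix n n ℝ) : f A = trace (Aᵀ * C) - l2 * frobSq A := by
    rw [trace_transpose_mul_sub_smul_one]
  have hopt : f ((1 / (2 * l2)) • P) = 1 / (4 * l2) * frobSq P := by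
    rw [hf, transpose_smul, smul_mul, trace_smul, trace_transpose_matPosPart_mul hC, frobSq_smul,
      smul_eq_mul]
    field_simp
    ring
  have hmax : IsMaxOn f {A | A.PosSemidef} ((1 / (2 * l2)) • P) := isMaxOn_iff.mpr fun A hA => by
    rw [hf, hopt]
    exact (sub_le_sub_right (trace_transpose_mul_le_matPosPart hA hC) _).trans
      (trace_transpose_mul_sub_le_frobSq A P hl2)
  have hP : ((1 / (2 * l2)) • P).PosSemidef :=
    (posSemidef_matPosPart hC).smul (by positivity)
  have hsup : ⨆ A : {A : Matrix n n ℝ // A.PosSemidef}, f A = f ((1 / (2 * l2)) • P) :=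
    hmax.iSup_eq hP
  exact ⟨hsup.trans hopt, hopt⟩

/-- Fenchel conjugate of `Ω(A) = λ₁‖A‖_* + λ₂‖A‖_F²` over the PSD cone:
`sup_{A ⪰ 0} ⟨A,B⟩ − λ₁ tr(A) − λ₂‖A‖_F² = (1/(4λ₂))‖[B − λ₁I]₊‖_F²`,
attained at `A* = (1/(2λ₂))[B − λ₁I]₊`. -/
theorem fenchel_conjugate_psd_cone
    {n : Type*} [Fintype n] [DecidableEq n]
    (B : Matrix n n ℝ) (hB : B.IsHermitian)
    (l1 l2 : ℝ) (hl1 : 0 ≤ l1) (hl2 : 0 < l2) :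
    (⨆ A : {A : Matrix n n ℝ // A.PosSemidef},
        Matrix.trace ((A : Matrix n n ℝ)ᵀ * B) - l1 * Matrix.trace (A : Matrix n n ℝ)
          - l2 * frobSq (A : Matrix n n ℝ)) =
      (1 / (4 * l2)) * frobSq (matPosPart (B - l1 • (1 : Matrix n n ℝ))) ∧
    (Matrix.trace (((1 / (2 * l2)) • matPosPart (B - l1 • (1 : Matrix n n ℝ)))ᵀ * B)
        - l1 * Matrix.trace ((1 / (2 * l2)) • matPosPart (B - l1 • (1 : Matrix n n ℝ)))
        - l2 * frobSq ((1 / (2 * l2)) • matPosPart (B - l1 • (1 : Matrix n n ℝ)))) =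
      (1 / (4 * l2)) * frobSq (matPosPart (B - l1 • (1 : Matrix n n ℝ))) :=
  fenchel_conjugate_psd_cone_general B hB l1 l2 hl2
end

section
/- (Bretagnolle–Huber inequality) For probability measures P and Q on a common measurable space, the total variation distance satisfies TV(P,Q)² ≤ 1 − exp(−KL(P‖Q)), where KL denotes the Kullback–Leibler divergence. -/
open MeasureTheory Classical

/-- Total variation distance `sup_A |P(A) − Q(A)|` (over measurable sets). -/
noncomputable def tvDist {Ω : Type*} [MeasurableSpace Ω] (P Q : Measure Ω) : ℝ :=
  ⨆ s : {s : Set Ω // MeasurableSet s}, |(P s.1).toReal - (Q s.1).toReal|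

/-- Kullback–Leibler divergence: `∫ log(dP/dQ) dP` when `P ≪ Q` (and the
integrand is integrable), and `+∞` otherwise. -/

noncomputable def klDivergence {Ω : Type*} [MeasurableSpace Ω] (P Q : Measure Ω) :
    ENNReal :=
  if P ≪ Q ∧ Integrable (fun x => Real.log (P.rnDeriv Q x).toReal) P then
    ENNReal.ofReal (∫ x, Real.log (P.rnDeriv Q x).toReal ∂P)
  else ⊤

/-!
Write `p = dP/dQ` and `T = ∫ (p - 1)⁺ dQ`, so that `TV(P, Q) ≤ T`, `∫ min p 1 dQ = 1 - T` and
`∫ max p 1 dQ = 1 + T`. Since `min p 1 * max p 1 = p`, Cauchy–Schwarz gives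
`(∫ √p dQ)² ≤ (1 - T)(1 + T) = 1 - T²`, while Jensen's inequality for `exp` under `P` gives
`∫ √p dQ = ∫ exp (-(log p) / 2) dP ≥ exp (-KL / 2)`. Hence `TV² ≤ T² ≤ 1 - exp (-KL)`.
-/

section SqrtMul

variable {α : Type*} [MeasurableSpace α] {μ : Measure α} {f g : α → ℝ}

lemma MeasureTheory.Integrable.sqrt_mul (hf : Integrable f μ) (hg : Integrable g μ)
    (hf₀ : 0 ≤ f) (hg₀ : 0 ≤ g) :
    Integrable (fun x => √(f x * g x)) μ := by
  refine ((hf.add hg).div_const 2).mono'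
    (hf.aemeasurable.mul hg.aemeasurable).sqrt.aestronglyMeasurable (.of_forall fun x => ?_)
  rw [Real.norm_of_nonneg (Real.sqrt_nonneg _), Real.sqrt_mul (hf₀ x)]
  have := two_mul_le_add_sq √(f x) √(g x)
  rw [Real.sq_sqrt (hf₀ x), Real.sq_sqrt (hg₀ x)] at this
  simp only [Pi.add_apply]
  linarith

lemma sq_integral_sqrt_mul_le (hf : Integrable f μ) (hg : Integrable g μ)
    (hf₀ : 0 ≤ f) (hg₀ : 0 ≤ g) :
    (∫ x, √(f x * g x) ∂μ) ^ 2 ≤ (∫ x, f x ∂μ) * ∫ x, g x ∂μ := by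
  have hfg := hf.sqrt_mul hg hf₀ hg₀
  have hquad (t : ℝ) :
      0 ≤ (∫ x, f x ∂μ) * (t * t) + (-2 * ∫ x, √(f x * g x) ∂μ) * t
        + ∫ x, g x ∂μ := by
    have hsq (x : α) :
        (t * √(f x) - √(g x)) ^ 2 = f x * (t * t) + -2 * t * √(f x * g x) + g x := by
      rw [Real.sqrt_mul (hf₀ x)]
      nlinarith [Real.sq_sqrt (hf₀ x), Real.sq_sqrt (hg₀ x)]
    calc 0 ≤ ∫ x, (t * √(f x) - √(g x)) ^ 2 ∂μ := integral_nonneg fun x => sq_nonneg _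
      _ = _ := by
        simp_rw [hsq]
        rw [integral_add _ hg, integral_add (hf.mul_const _) (hfg.const_mul _), integral_mul_const,
          integral_const_mul]
        · ring
        · exact (hf.mul_const _).add (hfg.const_mul _)
  have hdisc := discrim_le_zero hquad
  rw [discrim] at hdisc
  linarith

end SqrtMul

lemma mul_exp_neg_log_div_two {x : ℝ} (hx : 0 ≤ x) :
    x * Real.exp (-(Real.log x / 2)) = √x := by
  rcases hx.eq_or_lt with rfl | hx
  · simp
  rw [← Real.log_sqrt hx.le, Real.exp_neg, Real.exp_log (Real.sqrt_pos.2 hx), ← div_eq_mul_inv,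
    Real.div_sqrt]

section RadonNikodym

variable {Ω : Type*} [MeasurableSpace Ω] {P Q : Measure Ω}

lemma integrable_posPart_rnDeriv_sub_one [IsFiniteMeasure P] [IsFiniteMeasure Q] :
    Integrable (fun x => max ((P.rnDeriv Q x).toReal - 1) 0) Q :=
  (Measure.integrable_toReal_rnDeriv.sub (integrable_const 1)).pos_part

lemma abs_toReal_sub_toReal_le_one [IsProbabilityMeasure P] [IsProbabilityMeasure Q] (s : Set Ω) :
    |(P s).toReal - (Q s).toReal| ≤ 1 :=
  abs_sub_le_of_nonneg_of_le ENNReal.toReal_nonneg measureReal_le_one ENNReal.toReal_nonneg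
    measureReal_le_one

lemma tvDist_nonneg [IsProbabilityMeasure P] [IsProbabilityMeasure Q] : 0 ≤ tvDist P Q := by
  have hbdd : BddAbove (Set.range fun s : {s : Set Ω // MeasurableSet s} =>
      |(P s.1).toReal - (Q s.1).toReal|) :=
    ⟨1, Set.forall_mem_range.2 fun s => abs_toReal_sub_toReal_le_one s.1⟩
  exact (abs_nonneg _).trans (le_ciSup hbdd ⟨∅, .empty⟩)

lemma tvDist_le_one [IsProbabilityMeasure P] [IsProbabilityMeasure Q] : tvDist P Q ≤ 1 :=
  ciSup_le fun s => abs_toReal_sub_toReal_le_one s.1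

lemma toReal_sub_toReal_le_integral_posPart_rnDeriv [IsFiniteMeasure P] [IsFiniteMeasure Q]
    (hPQ : P ≪ Q) (s : Set Ω) :
    (P s).toReal - (Q s).toReal ≤ ∫ x, max ((P.rnDeriv Q x).toReal - 1) 0 ∂Q := by
  have hp : Integrable (fun x => (P.rnDeriv Q x).toReal) Q := Measure.integrable_toReal_rnDeriv
  calc (P s).toReal - (Q s).toReal = ∫ x in s, ((P.rnDeriv Q x).toReal - 1) ∂Q := by
        rw [integral_sub hp.integrableOn (integrable_const 1).integrableOn,
          Measure.setIntegral_toReal_rnDeriv hPQ, setIntegral_const]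
        simp [measureReal_def]
    _ ≤ ∫ x in s, max ((P.rnDeriv Q x).toReal - 1) 0 ∂Q :=
        setIntegral_mono (hp.sub (integrable_const 1)).integrableOn
          integrable_posPart_rnDeriv_sub_one.integrableOn fun _ => le_max_left _ _
    _ ≤ ∫ x, max ((P.rnDeriv Q x).toReal - 1) 0 ∂Q :=
        setIntegral_le_integral integrable_posPart_rnDeriv_sub_one
          (.of_forall fun _ => le_max_right _ _)

lemma tvDist_le_integral_posPart_rnDeriv [IsProbabilityMeasure P] [IsProbabilityMeasure Q]
    (hPQ : P ≪ Q) : tvDist P Q ≤ ∫ x, max ((P.rnDeriv Q x).toReal - 1) 0 ∂Q := by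
  refine ciSup_le fun ⟨s, hs⟩ =>
    abs_le.2 ⟨?_, toReal_sub_toReal_le_integral_posPart_rnDeriv hPQ s⟩
  have := toReal_sub_toReal_le_integral_posPart_rnDeriv hPQ sᶜ
  rw [← measureReal_def, ← measureReal_def, probReal_compl_eq_one_sub hs,
    probReal_compl_eq_one_sub hs] at this
  simp only [measureReal_def] at this ⊢
  linarith

lemma integral_min_rnDeriv_one [IsProbabilityMeasure P] [IsProbabilityMeasure Q]
    (hPQ : P ≪ Q) :
    ∫ x, min (P.rnDeriv Q x).toReal 1 ∂Q
      = 1 - ∫ x, max ((P.rnDeriv Q x).toReal - 1) 0 ∂Q := by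
  have hp : Integrable (fun x => (P.rnDeriv Q x).toReal) Q := Measure.integrable_toReal_rnDeriv
  have hmin : ∀ a : ℝ, min a 1 = a - max (a - 1) 0 := fun a => by
    rcases le_total a 1 with h | h <;> simp [h]
  simp_rw [hmin]
  rw [integral_sub hp integrable_posPart_rnDeriv_sub_one, Measure.integral_toReal_rnDeriv hPQ,
    probReal_univ]

lemma integral_max_rnDeriv_one [IsFiniteMeasure P] [IsProbabilityMeasure Q] :
    ∫ x, max (P.rnDeriv Q x).toReal 1 ∂Q
      = 1 + ∫ x, max ((P.rnDeriv Q x).toReal - 1) 0 ∂Q := by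
  have hmax : ∀ a : ℝ, max a 1 = 1 + max (a - 1) 0 := fun a => by
    rcases le_total a 1 with h | h <;> simp [h]
  simp_rw [hmax]
  rw [integral_add (integrable_const 1) integrable_posPart_rnDeriv_sub_one, integral_const,
    probReal_univ, one_smul]

lemma sq_integral_sqrt_rnDeriv_le [IsProbabilityMeasure P] [IsProbabilityMeasure Q]
    (hPQ : P ≪ Q) :
    (∫ x, √(P.rnDeriv Q x).toReal ∂Q) ^ 2
      ≤ 1 - (∫ x, max ((P.rnDeriv Q x).toReal - 1) 0 ∂Q) ^ 2 := by
  have hp : Integrable (fun x => (P.rnDeriv Q x).toReal) Q := Measure.integrable_toReal_rnDeriv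
  have h := sq_integral_sqrt_mul_le (μ := Q) (hp.inf (integrable_const 1))
    (hp.sup (integrable_const 1)) (fun x => le_min ENNReal.toReal_nonneg zero_le_one)
    (fun x => zero_le_one.trans (le_max_right _ _))
  simp only [Pi.inf_apply, Pi.sup_apply, min_mul_max, mul_one] at h
  rw [integral_min_rnDeriv_one hPQ, integral_max_rnDeriv_one] at h
  linarith

lemma exp_neg_integral_log_rnDeriv_div_two_le [IsProbabilityMeasure P] [IsFiniteMeasure Q]
    (hPQ : P ≪ Q) (hlog : Integrable (fun x => Real.log (P.rnDeriv Q x).toReal) P) :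
    Real.exp (-(∫ x, Real.log (P.rnDeriv Q x).toReal ∂P) / 2)
      ≤ ∫ x, √(P.rnDeriv Q x).toReal ∂Q := by
  have hp : Integrable (fun x => (P.rnDeriv Q x).toReal) Q := Measure.integrable_toReal_rnDeriv
  have hsqrt : Integrable (fun x => √(P.rnDeriv Q x).toReal) Q := by
    simpa using hp.sqrt_mul (integrable_const 1) (fun _ => ENNReal.toReal_nonneg) zero_le_one
  have hchange : ∫ x, √(P.rnDeriv Q x).toReal ∂Q
      = ∫ x, Real.exp (-(Real.log (P.rnDeriv Q x).toReal / 2)) ∂P := by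
    rw [← integral_rnDeriv_smul hPQ]
    simp only [smul_eq_mul, mul_exp_neg_log_div_two ENNReal.toReal_nonneg]
  have hexp : Integrable (fun x => Real.exp (-(Real.log (P.rnDeriv Q x).toReal / 2))) P := by
    rw [← integrable_rnDeriv_smul_iff hPQ]
    simpa only [smul_eq_mul, mul_exp_neg_log_div_two ENNReal.toReal_nonneg] using hsqrt
  rw [hchange, neg_div, ← integral_div, ← integral_neg]
  exact convexOn_exp.map_integral_le Real.continuous_exp.continuousOn isClosed_univ
    (.of_forall fun _ => Set.mem_univ _) (hlog.div_const 2).neg hexp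

lemma sq_tvDist_le_one_sub_exp_neg_integral_log_rnDeriv [IsProbabilityMeasure P]
    [IsProbabilityMeasure Q] (hPQ : P ≪ Q)
    (hlog : Integrable (fun x => Real.log (P.rnDeriv Q x).toReal) P) :
    tvDist P Q ^ 2 ≤ 1 - Real.exp (-∫ x, Real.log (P.rnDeriv Q x).toReal ∂P) := by
  set I := ∫ x, Real.log (P.rnDeriv Q x).toReal ∂P
  calc tvDist P Q ^ 2 ≤ (∫ x, max ((P.rnDeriv Q x).toReal - 1) 0 ∂Q) ^ 2 :=
        pow_le_pow_left₀ tvDist_nonneg (tvDist_le_integral_posPart_rnDeriv hPQ) 2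
    _ ≤ 1 - (∫ x, √(P.rnDeriv Q x).toReal ∂Q) ^ 2 := by
        linarith [sq_integral_sqrt_rnDeriv_le hPQ]
    _ ≤ 1 - Real.exp (-I / 2) ^ 2 := by
        gcongr
        exact exp_neg_integral_log_rnDeriv_div_two_le hPQ hlog
    _ = 1 - Real.exp (-I) := by rw [← Real.exp_nat_mul]; ring_nf

end RadonNikodym

/-- Bretagnolle–Huber inequality: `TV(P,Q)² ≤ 1 − exp(−KL(P‖Q))`
(with the convention `exp(−∞) = 0`). -/
theorem bretagnolle_huber
    {Ω : Type*} [MeasurableSpace Ω] (P Q : Measure Ω)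
    [IsProbabilityMeasure P] [IsProbabilityMeasure Q] :
    tvDist P Q ^ 2 ≤
      if klDivergence P Q = ⊤ then 1
      else 1 - Real.exp (-(klDivergence P Q).toReal) := by
  by_cases hPQ : P ≪ Q ∧ Integrable (fun x => Real.log (P.rnDeriv Q x).toReal) P
  · rw [klDivergence, if_pos hPQ, if_neg ENNReal.ofReal_ne_top, ENNReal.toReal_ofReal']
    calc tvDist P Q ^ 2 ≤ 1 - Real.exp (-∫ x, Real.log (P.rnDeriv Q x).toReal ∂P) :=
          sq_tvDist_le_one_sub_exp_neg_integral_log_rnDeriv hPQ.1 hPQ.2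
      -- `ENNReal.ofReal` truncates the integral at `0`
      _ ≤ _ := by gcongr; exact le_max_left _ _
  · rw [klDivergence, if_neg hPQ, if_pos rfl]
    exact pow_le_one₀ tvDist_nonneg tvDist_le_one
end

section
/- (Split conformal marginal coverage) Let S₁, …, S_{m+1} be exchangeable real-valued random variables. Define q̂ as the ⌈(1−α)(m+1)⌉-th smallest value among S₁, …, S_m (with q̂ = +∞ if ⌈(1−α)(m+1)⌉ > m). Then P(S_{m+1} ≤ q̂) ≥ 1 − α. -/
open MeasureTheory Classical
open scoped ENNReal
open Finset

/-! Let `R_j` be the number of scores strictly below `S_j`. For every outcome at least `k` of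
the indices `j` have `R_j < k` (the first `k` positions of a sorting permutation), and by
exchangeability the events `{R_j < k}` all have the same probability; hence
`(m + 1) P(R_{m+1} < k) ≥ k ≥ (1 - α)(m + 1)`. If `R_{m+1} < k`, fewer than `k` calibration
scores lie strictly below `S_{m+1}`, so `S_{m+1} ≤ q̂`. -/

section StrictRank

variable {ι α : Type*} [Fintype ι] [LinearOrder α]

def strictRank (x : ι → α) (j : ι) : ℕ := #{i | x i < x j}

theorem strictRank_comp_perm (x : ι → α) (σ : Equiv.Perm ι) (j : ι) :
    strictRank (x ∘ σ) j = strictRank x (σ j) :=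
  card_equiv σ fun i => by simp

theorem strictRank_le_of_monotone {n : ℕ} {y : Fin n → α} (hy : Monotone y) (p : Fin n) :
    strictRank y p ≤ p :=
  calc strictRank y p ≤ #(Iio p) := card_le_card fun q hq => by
        simp only [mem_filter, mem_univ, true_and, mem_Iio] at hq ⊢
        exact hy.reflect_lt hq
    _ = p := Fin.card_Iio p

theorem le_card_strictRank_lt {n k : ℕ} (x : Fin n → α) (hk : k ≤ n) :
    k ≤ #{j | strictRank x j < k} := by
  set σ := Tuple.sort x
  have hsub : ({p : Fin n | (p : ℕ) < k} : Finset (Fin n)).map σ.toEmbedding ⊆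
      ({j | strictRank x j < k} : Finset (Fin n)) := by
    intro j hj
    obtain ⟨p, hp, rfl⟩ := mem_map.mp hj
    rw [mem_filter_univ] at hp ⊢
    calc strictRank x (σ p) = strictRank (x ∘ σ) p := (strictRank_comp_perm x σ p).symm
      _ ≤ p := strictRank_le_of_monotone (Tuple.monotone_sort x) p
      _ < k := hp
  calc k = #{p : Fin n | (p : ℕ) < k} := by rw [Fin.card_filter_val_lt, min_eq_right hk]
    _ = #(({p : Fin n | (p : ℕ) < k} : Finset (Fin n)).map σ.toEmbedding) := (card_map _).symm
    _ ≤ _ := card_le_card hsub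

theorem measurable_strictRank [TopologicalSpace α] [OrderClosedTopology α]
    [SecondCountableTopology α] [MeasurableSpace α] [OpensMeasurableSpace α] (j : ι) :
    Measurable fun x : ι → α => strictRank x j := by
  simp_rw [strictRank, card_filter]
  exact Finset.measurable_sum _ fun i _ => Measurable.ite
    (measurableSet_lt (measurable_pi_apply i) (measurable_pi_apply j)) measurable_const
      measurable_const

end StrictRank

theorem le_csInf_of_card_lt {ι β : Type*} [Fintype ι] [ConditionallyCompleteLinearOrder β]
    (y : ι → β) {a : β} {k : ℕ} (hk : k ≤ Fintype.card ι) (ha : #{i | y i < a} < k) :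
    a ≤ sInf {t | k ≤ #{i | y i ≤ t}} := by
  have : Nonempty β := ⟨a⟩
  obtain ⟨M, hM⟩ := (Set.finite_range y).bddAbove
  refine le_csInf ⟨M, ?_⟩ fun t ht => ?_
  · rw [Set.mem_ofPred_eq, filter_true_of_mem fun i _ => hM (Set.mem_range_self i)]
    exact hk
  · by_contra! hlt
    refine (ht.trans (card_le_card fun i => ?_)).not_gt ha
    simp only [mem_filter_univ]
    exact fun hi => hi.trans_lt hlt

theorem ENNReal.ofReal_le_of_mul_le_natCast {r : ℝ} {n k : ℕ} {p : ℝ≥0∞} (hn : n ≠ 0)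
    (hr : r * n ≤ k) (hk : (k : ℝ≥0∞) ≤ n * p) : ENNReal.ofReal r ≤ p := by
  have hnr : (n : ℝ≥0∞) * ENNReal.ofReal r ≤ k := by
    rw [← ENNReal.ofReal_natCast n, ← ENNReal.ofReal_mul (Nat.cast_nonneg n),
      ← ENNReal.ofReal_natCast k]
    exact ENNReal.ofReal_le_ofReal (by linarith)
  exact (ENNReal.mul_le_mul_iff_right (by simpa) (ENNReal.natCast_ne_top n)).mp (hnr.trans hk)

namespace MeasureTheory

variable {Ω : Type*} [MeasurableSpace Ω]

theorem le_sum_measure_of_le_card_mem {ι : Type*} [Fintype ι] (μ : Measure Ω) {A : ι → Set Ω}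
    (hA : ∀ j, MeasurableSet (A j)) {k : ℕ} (hk : ∀ ω, k ≤ #{j | ω ∈ A j}) :
    k * μ Set.univ ≤ ∑ j, μ (A j) :=
  calc k * μ Set.univ = ∫⁻ _, (k : ℝ≥0∞) ∂μ := (lintegral_const _).symm
    _ ≤ ∫⁻ ω, ∑ j, (A j).indicator 1 ω ∂μ := lintegral_mono fun ω => by
        simpa [Set.indicator_apply] using hk ω
    _ = ∑ j, ∫⁻ ω, (A j).indicator 1 ω ∂μ :=
        lintegral_finsetSum _ fun j _ => measurable_one.indicator (hA j)
    _ = ∑ j, μ (A j) := by simp only [lintegral_indicator_one (hA _)]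

variable {ι α : Type*} [Fintype ι] [LinearOrder α] [TopologicalSpace α] [OrderClosedTopology α]
    [SecondCountableTopology α] [MeasurableSpace α] [OpensMeasurableSpace α]
    {P : Measure Ω}

theorem measure_strictRank_lt_eq {X : Ω → ι → α} (hX : Measurable X)
    (hexch : ∀ σ : Equiv.Perm ι, P.map (fun ω i => X ω (σ i)) = P.map X) (k : ℕ) (j j' : ι) :
    P {ω | strictRank (X ω) j < k} = P {ω | strictRank (X ω) j' < k} := by
  set σ := Equiv.swap j j'
  have hB : MeasurableSet {x : ι → α | strictRank x j < k} :=
    measurableSet_lt (measurable_strictRank j) measurable_const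
  have hXσ : Measurable fun ω i => X ω (σ i) :=
    measurable_pi_lambda _ fun i => (measurable_pi_apply (σ i)).comp hX
  have hpre : {ω | strictRank (X ω) j' < k} =
      (fun ω i => X ω (σ i)) ⁻¹' {x | strictRank x j < k} := by
    ext ω
    change _ ↔ strictRank (X ω ∘ σ) j < k
    rw [strictRank_comp_perm, Equiv.swap_apply_left]
    rfl
  rw [hpre, ← Measure.map_apply hXσ hB, hexch σ, Measure.map_apply hX hB]
  rfl

theorem le_mul_measure_strictRank_lt [IsProbabilityMeasure P] {n k : ℕ} {X : Ω → Fin n → α}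
    (hX : Measurable X) (hexch : ∀ σ : Equiv.Perm (Fin n), P.map (fun ω i => X ω (σ i)) = P.map X)
    (hk : k ≤ n) (j : Fin n) :
    (k : ℝ≥0∞) ≤ n * P {ω | strictRank (X ω) j < k} :=
  calc (k : ℝ≥0∞) = k * P Set.univ := by rw [measure_univ, mul_one]
    _ ≤ ∑ j', P {ω | strictRank (X ω) j' < k} :=
        le_sum_measure_of_le_card_mem P
          (fun j' => measurableSet_lt ((measurable_strictRank j').comp hX) measurable_const)
          fun ω => by simpa using le_card_strictRank_lt (X ω) hk
    _ = ∑ _j' : Fin n, P {ω | strictRank (X ω) j < k} :=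
        sum_congr rfl fun j' _ => measure_strictRank_lt_eq hX hexch k j' j
    _ = n * P {ω | strictRank (X ω) j < k} := by simp

end MeasureTheory

/-- Split conformal marginal coverage: if `S 0, …, S m` (i.e. `S₁,…,S_{m+1}`)
are exchangeable real random variables and `q̂` is the `⌈(1−α)(m+1)⌉`-th
smallest value among the first `m` of them (`+∞` if `⌈(1−α)(m+1)⌉ > m`),
then `P(S_{m+1} ≤ q̂) ≥ 1 − α`. -/
theorem split_conformal_marginal_coverage
    {Ω : Type*} [MeasurableSpace Ω] (P : Measure Ω) [IsProbabilityMeasure P]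
    (m : ℕ) (S : Fin (m + 1) → Ω → ℝ) (hS : ∀ i, Measurable (S i))
    (hexch : ∀ σ : Equiv.Perm (Fin (m + 1)),
      Measure.map (fun ω i => S (σ i) ω) P = Measure.map (fun ω i => S i ω) P)
    (α : ℝ) (hα : α ∈ Set.Ioo (0 : ℝ) 1)
    (k : ℕ) (hk : k = ⌈(1 - α) * (m + 1)⌉₊)
    (qhat : Ω → EReal)
    (hqhat : ∀ ω, qhat ω =
      if k ≤ m then
        ((sInf {t : ℝ |
          k ≤ (Finset.univ.filter fun i : Fin m => S i.castSucc ω ≤ t).card} : ℝ)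
            : EReal)
      else ⊤) :
    ENNReal.ofReal (1 - α) ≤ P {ω | (S (Fin.last m) ω : EReal) ≤ qhat ω} := by
  by_cases hkm : k ≤ m
  · set X : Ω → Fin (m + 1) → ℝ := fun ω i => S i ω
    have hcover : (k : ℝ≥0∞) ≤ (m + 1 : ℕ) * P {ω | strictRank (X ω) (Fin.last m) < k} :=
      le_mul_measure_strictRank_lt (measurable_pi_lambda _ hS) hexch (by omega) _
    have hevent : {ω | strictRank (X ω) (Fin.last m) < k} ⊆
        {ω | (S (Fin.last m) ω : EReal) ≤ qhat ω} := fun ω hω => by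
      rw [Set.mem_ofPred_eq, hqhat ω, if_pos hkm, EReal.coe_le_coe_iff]
      refine le_csInf_of_card_lt (fun i : Fin m => S i.castSucc ω) (by simpa using hkm)
        ((card_le_card_of_injOn Fin.castSucc (fun i hi => ?_)
          (Fin.castSucc_injective m).injOn).trans_lt hω)
      simpa using hi
    have hceil : (1 - α) * (m + 1 : ℕ) ≤ k := by
      rw [hk]; exact_mod_cast Nat.le_ceil _
    exact (ENNReal.ofReal_le_of_mul_le_natCast (by omega) hceil hcover).trans (measure_mono hevent)
  · have hall : {ω | (S (Fin.last m) ω : EReal) ≤ qhat ω} = Set.univ :=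
      Set.eq_univ_of_forall fun ω => by simp [hqhat ω, hkm]
    rw [hall, measure_univ]
    exact ENNReal.ofReal_le_one.mpr (by linarith [hα.1])
end
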